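/- Under the same one-way bipartite setup, the sum-normalized positive solution of the smoothed PageRank equation is unique, and it is an affine transformation with positive leading coefficient of PR_bip; consequently PR_bip induces the same ranking (ordering) of the nodes in V as the sum-normalized PageRank solution. -/

import Mathlib

/-!
In a one-way graph the nodes with out-links receive no links, so in the PageRank equation at such
a node only the teleportation term `teleport g` survives, and it does not depend on the node.
Hence a solution `g` is constant `teleport g` on the linking nodes, its link term at `v` is
`λ * teleport g * PR_bip v`, and so `g = teleport g * (1 + λ * PR_bip)`. Conversely every multiple
of `1 + λ * PR_bip` solves the equation, and the normalization fixes the multiple.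
-/

open Finset

noncomputable section

namespace PageRank

variable {V : Type*} (wt : V → V → ℝ)

def IsOneWay : Prop := ∀ u v w, wt u v ≠ 0 → wt v w = 0

theorem isOneWay_of_bipartite {L R : Finset V} (hdisj : ∀ v, ¬(v ∈ L ∧ v ∈ R))
    (hbip : ∀ u v, wt u v ≠ 0 → u ∈ L ∧ v ∈ R) : IsOneWay wt := by
  intro u v w huv
  by_contra hvw
  exact hdisj v ⟨(hbip v w hvw).1, (hbip u v huv).2⟩

variable [Fintype V]

def outWeight (u : V) : ℝ := ∑ v, wt u v

def linking : Finset V := univ.filter fun u => 0 < outWeight wt u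

def dangling : Finset V := univ.filter fun u => outWeight wt u = 0

def prBip (v : V) : ℝ := ∑ u ∈ linking wt, wt u v / outWeight wt u

def linkFlow (g : V → ℝ) (v : V) : ℝ := ∑ u ∈ linking wt, wt u v / outWeight wt u * g u

def teleport (lam : ℝ) (g : V → ℝ) : ℝ :=
  (1 - lam) / Fintype.card V * ∑ u ∈ linking wt, g u + (∑ u ∈ dangling wt, g u) / Fintype.card V

def smoothedPageRank (lam : ℝ) (g : V → ℝ) (v : V) : ℝ :=
  (∑ u ∈ linking wt, ((1 - lam) / (Fintype.card V : ℝ) + lam * wt u v / outWeight wt u) * g u) +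
    ∑ u ∈ dangling wt, (1 / (Fintype.card V : ℝ)) * g u

def pageRankProfile (lam : ℝ) (v : V) : ℝ := 1 + lam * prBip wt v

def pageRankSolution (lam : ℝ) (v : V) : ℝ :=
  (∑ w, pageRankProfile wt lam w)⁻¹ * pageRankProfile wt lam v

variable {wt}

theorem IsOneWay.wt_eq_zero_of_mem_linking (h : IsOneWay wt) {u v : V}
    (hv : v ∈ linking wt) : wt u v = 0 := by
  by_contra huv
  have hout : outWeight wt v = 0 := sum_eq_zero fun w _ => h u v w huv
  simp [linking, hout] at hv

theorem outWeight_nonneg (hnn : ∀ u v, 0 ≤ wt u v) (u : V) : 0 ≤ outWeight wt u :=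
  sum_nonneg fun v _ => hnn u v

theorem sum_linking_add_sum_dangling (hnn : ∀ u v, 0 ≤ wt u v) (g : V → ℝ) :
    ∑ u ∈ linking wt, g u + ∑ u ∈ dangling wt, g u = ∑ u, g u := by
  have hdangling : dangling wt = univ.filter fun u => ¬ 0 < outWeight wt u := by
    ext u
    simp [dangling, (outWeight_nonneg hnn u).ge_iff_eq', eq_comm]
  rw [hdangling]
  exact sum_filter_add_sum_filter_not univ _ g

theorem prBip_nonneg (hnn : ∀ u v, 0 ≤ wt u v) (v : V) : 0 ≤ prBip wt v :=
  sum_nonneg fun u hu => div_nonneg (hnn u v) (mem_filter.mp hu).2.le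

theorem sum_prBip : ∑ v, prBip wt v = #(linking wt) := by
  unfold prBip
  rw [sum_comm, card_eq_sum_ones, Nat.cast_sum]
  refine sum_congr rfl fun u hu => ?_
  rw [← sum_div, Nat.cast_one]
  exact div_self (mem_filter.mp hu).2.ne'

theorem IsOneWay.prBip_eq_zero_of_mem_linking (h : IsOneWay wt) {v : V}
    (hv : v ∈ linking wt) : prBip wt v = 0 :=
  sum_eq_zero fun u _ => by rw [h.wt_eq_zero_of_mem_linking hv, zero_div]

theorem IsOneWay.linkFlow_eq_zero_of_mem_linking (h : IsOneWay wt) (g : V → ℝ) {v : V}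
    (hv : v ∈ linking wt) : linkFlow wt g v = 0 :=
  sum_eq_zero fun u _ => by rw [h.wt_eq_zero_of_mem_linking hv, zero_div, zero_mul]

theorem linkFlow_of_eqOn_linking {g : V → ℝ} {c : ℝ} (hg : ∀ u ∈ linking wt, g u = c)
    (v : V) : linkFlow wt g v = c * prBip wt v := by
  rw [prBip, mul_sum]
  exact sum_congr rfl fun u hu => by rw [hg u hu, mul_comm]

theorem smoothedPageRank_eq_teleport_add_linkFlow (lam : ℝ) (g : V → ℝ) (v : V) :
    smoothedPageRank wt lam g v = teleport wt lam g + lam * linkFlow wt g v := by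
  have hsplit : ∀ u, ((1 - lam) / Fintype.card V + lam * wt u v / outWeight wt u) * g u =
      (1 - lam) / Fintype.card V * g u + lam * (wt u v / outWeight wt u * g u) :=
    fun u => by ring
  rw [smoothedPageRank, teleport, linkFlow, sum_congr rfl fun u _ => hsplit u,
    sum_add_distrib, ← mul_sum, ← mul_sum, ← mul_sum]
  ring

theorem pageRankProfile_pos (hnn : ∀ u v, 0 ≤ wt u v) {lam : ℝ} (hlam : 0 ≤ lam) (v : V) :
    0 < pageRankProfile wt lam v :=
  add_pos_of_pos_of_nonneg one_pos (mul_nonneg hlam (prBip_nonneg hnn v))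

theorem sum_pageRankProfile (lam : ℝ) :
    ∑ v, pageRankProfile wt lam v = Fintype.card V + lam * #(linking wt) := by
  simp only [pageRankProfile, sum_add_distrib, ← mul_sum, sum_prBip, sum_const, card_univ,
    nsmul_eq_mul, mul_one]

theorem sum_pageRankProfile_pos [Nonempty V] (hnn : ∀ u v, 0 ≤ wt u v) {lam : ℝ}
    (hlam : 0 ≤ lam) : 0 < ∑ v, pageRankProfile wt lam v :=
  sum_pos (fun v _ => pageRankProfile_pos hnn hlam v) univ_nonempty

theorem IsOneWay.pageRankProfile_eq_one_of_mem_linking (h : IsOneWay wt) (lam : ℝ) {v : V}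
    (hv : v ∈ linking wt) : pageRankProfile wt lam v = 1 := by
  rw [pageRankProfile, h.prBip_eq_zero_of_mem_linking hv, mul_zero, add_zero]

theorem IsOneWay.teleport_const_mul_pageRankProfile [Nonempty V] (h : IsOneWay wt)
    (hnn : ∀ u v, 0 ≤ wt u v) (lam c : ℝ) :
    teleport wt lam (fun v => c * pageRankProfile wt lam v) = c := by
  have hlink : ∑ u ∈ linking wt, c * pageRankProfile wt lam u = c * #(linking wt) := by
    rw [sum_congr rfl fun u hu => by rw [h.pageRankProfile_eq_one_of_mem_linking lam hu],
      sum_const, nsmul_eq_mul, mul_one, mul_comm]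
  have htotal := sum_linking_add_sum_dangling hnn fun v => c * pageRankProfile wt lam v
  rw [hlink] at htotal
  have hcard : (Fintype.card V : ℝ) ≠ 0 := Nat.cast_ne_zero.2 Fintype.card_ne_zero
  rw [teleport, hlink, eq_sub_of_add_eq' htotal, ← mul_sum, sum_pageRankProfile]
  field_simp
  ring

theorem IsOneWay.smoothedPageRank_const_mul_pageRankProfile [Nonempty V] (h : IsOneWay wt)
    (hnn : ∀ u v, 0 ≤ wt u v) (lam c : ℝ) (v : V) :
    smoothedPageRank wt lam (fun w => c * pageRankProfile wt lam w) v =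
      c * pageRankProfile wt lam v := by
  have hlink : ∀ u ∈ linking wt, c * pageRankProfile wt lam u = c := fun u hu => by
    rw [h.pageRankProfile_eq_one_of_mem_linking lam hu, mul_one]
  rw [smoothedPageRank_eq_teleport_add_linkFlow, h.teleport_const_mul_pageRankProfile hnn,
    linkFlow_of_eqOn_linking hlink, pageRankProfile]
  ring

theorem IsOneWay.eq_teleport_mul_pageRankProfile (h : IsOneWay wt) {lam : ℝ} {g : V → ℝ}
    (hg : ∀ v, g v = smoothedPageRank wt lam g v) (v : V) :
    g v = teleport wt lam g * pageRankProfile wt lam v := by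
  have hlink : ∀ u ∈ linking wt, g u = teleport wt lam g := fun u hu => by
    rw [hg u, smoothedPageRank_eq_teleport_add_linkFlow,
      h.linkFlow_eq_zero_of_mem_linking g hu, mul_zero, add_zero]
  rw [hg v, smoothedPageRank_eq_teleport_add_linkFlow, linkFlow_of_eqOn_linking hlink,
    pageRankProfile]
  ring

theorem IsOneWay.eq_pageRankSolution (h : IsOneWay wt) {lam : ℝ} {g : V → ℝ}
    (hg : ∀ v, g v = smoothedPageRank wt lam g v) (hsum : ∑ v, g v = 1) :
    g = pageRankSolution wt lam := by
  have hprofile := h.eq_teleport_mul_pageRankProfile hg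
  have hscale : teleport wt lam g * ∑ w, pageRankProfile wt lam w = 1 := by
    rw [mul_sum, ← hsum]
    exact sum_congr rfl fun v _ => (hprofile v).symm
  funext v
  rw [hprofile v, pageRankSolution, ← eq_inv_of_mul_eq_one_left hscale]

theorem pageRankSolution_pos [Nonempty V] (hnn : ∀ u v, 0 ≤ wt u v) {lam : ℝ}
    (hlam : 0 ≤ lam) (v : V) : 0 < pageRankSolution wt lam v :=
  mul_pos (inv_pos.2 (sum_pageRankProfile_pos hnn hlam)) (pageRankProfile_pos hnn hlam v)

theorem sum_pageRankSolution [Nonempty V] (hnn : ∀ u v, 0 ≤ wt u v) {lam : ℝ}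
    (hlam : 0 ≤ lam) : ∑ v, pageRankSolution wt lam v = 1 := by
  unfold pageRankSolution
  rw [← mul_sum]
  exact inv_mul_cancel₀ (sum_pageRankProfile_pos hnn hlam).ne'

theorem pageRankSolution_eq_affine (lam : ℝ) (v : V) :
    pageRankSolution wt lam v = (∑ w, pageRankProfile wt lam w)⁻¹ * lam * prBip wt v +
      (∑ w, pageRankProfile wt lam w)⁻¹ := by
  rw [pageRankSolution, pageRankProfile]
  ring

end PageRank

end

open PageRank in
theorem pagerank_unique_and_affine_of_prBip_general
    {V : Type*} [Fintype V] [Nonempty V]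
    (wt : V → V → ℝ) (L R : Finset V) (lam : ℝ)
    (hlam : 0 < lam)
    (hdisj : ∀ v : V, ¬(v ∈ L ∧ v ∈ R))
    (hnn : ∀ u v : V, 0 ≤ wt u v)
    (hbip : ∀ u v : V, wt u v ≠ 0 → u ∈ L ∧ v ∈ R)
    (out : V → ℝ) (hout : ∀ u : V, out u = ∑ v : V, wt u v)
    (PRbip : V → ℝ)
    (hPRbip : ∀ v : V,
      PRbip v = ∑ u ∈ univ.filter (fun u => 0 < out u), wt u v / out u) :
    ∃ f : V → ℝ,
      ((∀ v : V, 0 < f v) ∧ (∑ v : V, f v) = 1 ∧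
        (∀ v : V, f v =
          (∑ u ∈ univ.filter (fun u => 0 < out u),
            ((1 - lam) / (Fintype.card V : ℝ) + lam * wt u v / out u) * f u) +
          ∑ u ∈ univ.filter (fun u => out u = 0),
            (1 / (Fintype.card V : ℝ)) * f u)) ∧
      (∀ g : V → ℝ,
        ((∀ v : V, 0 < g v) ∧ (∑ v : V, g v) = 1 ∧
          (∀ v : V, g v =
            (∑ u ∈ univ.filter (fun u => 0 < out u),
              ((1 - lam) / (Fintype.card V : ℝ) + lam * wt u v / out u) * g u) +
            ∑ u ∈ univ.filter (fun u => out u = 0),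
              (1 / (Fintype.card V : ℝ)) * g u)) → g = f) ∧
      (∃ a b : ℝ, 0 < a ∧ ∀ v : V, f v = a * PRbip v + b) ∧
      (∀ u v : V, PRbip u < PRbip v ↔ f u < f v) := by
  obtain rfl : out = outWeight wt := funext hout
  obtain rfl : PRbip = prBip wt := funext hPRbip
  have hone : IsOneWay wt := isOneWay_of_bipartite wt hdisj hbip
  have hslope : 0 < (∑ w, pageRankProfile wt lam w)⁻¹ * lam :=
    mul_pos (inv_pos.2 (sum_pageRankProfile_pos hnn hlam.le)) hlam
  refine ⟨pageRankSolution wt lam,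
    ⟨pageRankSolution_pos hnn hlam.le, sum_pageRankSolution hnn hlam.le,
      fun v => (hone.smoothedPageRank_const_mul_pageRankProfile hnn lam _ v).symm⟩,
    fun g ⟨_, hsum, hg⟩ => hone.eq_pageRankSolution hg hsum,
    ⟨_, _, hslope, pageRankSolution_eq_affine lam⟩, fun u v => ?_⟩
  rw [pageRankSolution_eq_affine, pageRankSolution_eq_affine, add_lt_add_iff_right,
    mul_lt_mul_iff_of_pos_left hslope]

/-- On a one-way bipartite graph the sum-normalized positive solution of the
smoothed PageRank equation is unique, and it is an affine transformation (with
positive leading coefficient) of `PR_bip`; hence `PR_bip` induces the same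
ranking of the nodes as the PageRank solution. -/
theorem pagerank_unique_and_affine_of_prBip
    {V : Type*} [Fintype V] [Nonempty V]
    (wt : V → V → ℝ) (L R : Finset V) (lam : ℝ)
    (hlam : 0 < lam) (hlam' : lam < 1)
    (hLne : L.Nonempty) (hRne : R.Nonempty)
    (hcover : ∀ v : V, v ∈ L ∨ v ∈ R)
    (hdisj : ∀ v : V, ¬(v ∈ L ∧ v ∈ R))
    (hnn : ∀ u v : V, 0 ≤ wt u v)
    (hbip : ∀ u v : V, wt u v ≠ 0 → u ∈ L ∧ v ∈ R)
    (hposout : ∀ u ∈ L, 0 < ∑ v : V, wt u v)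
    (out : V → ℝ) (hout : ∀ u : V, out u = ∑ v : V, wt u v)
    (PRbip : V → ℝ)
    (hPRbip : ∀ v : V,
      PRbip v = ∑ u ∈ univ.filter (fun u => 0 < out u), wt u v / out u) :
    ∃ f : V → ℝ,
      ((∀ v : V, 0 < f v) ∧ (∑ v : V, f v) = 1 ∧
        (∀ v : V, f v =
          (∑ u ∈ univ.filter (fun u => 0 < out u),
            ((1 - lam) / (Fintype.card V : ℝ) + lam * wt u v / out u) * f u) +
          ∑ u ∈ univ.filter (fun u => out u = 0),
            (1 / (Fintype.card V : ℝ)) * f u)) ∧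
      (∀ g : V → ℝ,
        ((∀ v : V, 0 < g v) ∧ (∑ v : V, g v) = 1 ∧
          (∀ v : V, g v =
            (∑ u ∈ univ.filter (fun u => 0 < out u),
              ((1 - lam) / (Fintype.card V : ℝ) + lam * wt u v / out u) * g u) +
            ∑ u ∈ univ.filter (fun u => out u = 0),
              (1 / (Fintype.card V : ℝ)) * g u)) → g = f) ∧
      (∃ a b : ℝ, 0 < a ∧ ∀ v : V, f v = a * PRbip v + b) ∧
      (∀ u v : V, PRbip u < PRbip v ↔ f u < f v) :=
  pagerank_unique_and_affine_of_prBip_general wt L R lam hlam hdisj hnn hbip out hout PRbip hPRbip
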